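/- arXiv:1803.10923 — 2 statements merged into one kernel-verified Lean document; each statement's English description precedes it below -/
import Mathlib

section
/- Let D ⊆ 2^V be a distributive lattice with ∅, V ∈ D, and H : D → ℝ submodular with Lovász extension h(x) = sup_{w ∈ B_D(H)} ⟨x, w⟩. If x ∈ ℝ^V satisfies h(x) < +∞, then for every α ∈ ℝ the superlevel set {v ∈ V : x(v) ≥ α} belongs to D. -/
/-!
Finiteness of `h(x)` forces `x` to be antitone for the preorder `u ⪯ v` ("every set of `D`
containing `v` contains `u`"): the base polytope is stable under moving mass from `u` to `v`,
and doing so raises `⟨x, w⟩` by `t (x v - x u)` for every `t ≥ 0`. Hence a superlevel set `A`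
of `x` is separated from its complement by sets of `D`, and `A` is a union of intersections of
these separating sets.
-/

open Finset

namespace Finset

variable {V : Type*} [Fintype V] [DecidableEq V]

theorem mem_of_forall_exists_mem_not_mem {D : Set (Finset V)} (hD0 : ∅ ∈ D)
    (hDV : univ ∈ D) (hDu : ∀ S T, S ∈ D → T ∈ D → S ∪ T ∈ D)
    (hDi : ∀ S T, S ∈ D → T ∈ D → S ∩ T ∈ D) (A : Finset V)
    (hsep : ∀ v ∈ A, ∀ u ∉ A, ∃ S ∈ D, v ∈ S ∧ u ∉ S) : A ∈ D := by
  choose! S hSD hS using hsep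
  have hA : A = A.sup fun v => Aᶜ.inf (S v) := by
    ext z
    simp only [mem_sup, mem_inf, mem_compl]
    constructor
    · exact fun hz => ⟨z, hz, fun u hu => (hS z hz u hu).1⟩
    · rintro ⟨v, hv, hzS⟩
      by_contra hz
      exact (hS v hv z hz).2 (hzS z hz)
  rw [hA]
  refine sup_mem D hD0 (fun S hS T hT => hDu S T hS hT) _ _ fun v hv =>
    inf_mem D hDV (fun S hS T hT => hDi S T hS hT) _ _ fun u hu => ?_
  exact hSD v hv u (mem_compl.1 hu)

end Finset

section Lovasz

variable {V : Type*} [Fintype V] (D : Set (Finset V)) (H : Finset V → ℝ)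

def basePolytope : Set (V → ℝ) :=
  {w | (∀ S ∈ D, ∑ v ∈ S, w v ≤ H S) ∧ ∑ v, w v = H univ}

noncomputable def lovaszExtension (x : V → ℝ) : EReal :=
  ⨆ w ∈ basePolytope D H, ((x ⬝ᵥ w : ℝ) : EReal)

variable {D H}

theorem dotProduct_le_toReal_lovaszExtension {x w : V → ℝ}
    (hx : lovaszExtension D H x ≠ ⊤) (hw : w ∈ basePolytope D H) :
    x ⬝ᵥ w ≤ (lovaszExtension D H x).toReal := by
  have hle : ((x ⬝ᵥ w : ℝ) : EReal) ≤ lovaszExtension D H x :=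
    le_iSup₂ (f := fun w (_ : w ∈ basePolytope D H) => ((x ⬝ᵥ w : ℝ) : EReal)) w hw
  exact_mod_cast hle.trans (EReal.le_coe_toReal hx)

theorem add_single_sub_single_mem_basePolytope [DecidableEq V] {w : V → ℝ} {u v : V}
    (hw : w ∈ basePolytope D H) (hvu : ∀ S ∈ D, v ∈ S → u ∈ S) {t : ℝ} (ht : 0 ≤ t) :
    w + Pi.single v t - Pi.single u t ∈ basePolytope D H := by
  have hsum : ∀ S : Finset V, ∑ z ∈ S, (w + Pi.single v t - Pi.single u t : V → ℝ) z =
      ∑ z ∈ S, w z + (if v ∈ S then t else 0) - (if u ∈ S then t else 0) := by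
    intro S
    simp only [Pi.sub_apply, Pi.add_apply, sum_sub_distrib, sum_add_distrib, sum_pi_single']
  refine ⟨fun S hS => ?_, ?_⟩
  · have hwS := hw.1 S hS
    rw [hsum]
    by_cases hvS : v ∈ S
    · simp only [hvS, hvu S hS hvS, if_true]
      linarith
    · by_cases huS : u ∈ S <;> simp only [hvS, huS, if_true, if_false] <;> linarith
  · rw [hsum, hw.2]
    simp

theorem nonpos_of_forall_add_mul_le {c d M : ℝ} (h : ∀ t : ℝ, 0 ≤ t → c + t * d ≤ M) :
    d ≤ 0 := by
  by_contra! hd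
  have := h ((|M - c| + 1) / d) (by positivity)
  rw [div_mul_cancel₀ _ hd.ne'] at this
  linarith [le_abs_self (M - c)]

theorem le_of_lovaszExtension_ne_top [DecidableEq V] (hB : (basePolytope D H).Nonempty)
    {x : V → ℝ} (hx : lovaszExtension D H x ≠ ⊤) {u v : V}
    (hvu : ∀ S ∈ D, v ∈ S → u ∈ S) : x v ≤ x u := by
  obtain ⟨w, hw⟩ := hB
  have hbound : ∀ t : ℝ, 0 ≤ t →
      x ⬝ᵥ w + t * (x v - x u) ≤ (lovaszExtension D H x).toReal := by
    intro t ht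
    have := dotProduct_le_toReal_lovaszExtension hx
      (add_single_sub_single_mem_basePolytope hw hvu ht)
    rw [dotProduct_sub, dotProduct_add, dotProduct_single, dotProduct_single] at this
    linarith
  linarith [nonpos_of_forall_add_mul_le hbound]

end Lovasz

theorem superlevel_mem_of_lovasz_finite_general {V : Type*} [Fintype V] [DecidableEq V]
    (D : Set (Finset V)) (hD0 : ∅ ∈ D) (hDV : Finset.univ ∈ D)
    (hDu : ∀ S T, S ∈ D → T ∈ D → S ∪ T ∈ D)
    (hDi : ∀ S T, S ∈ D → T ∈ D → S ∩ T ∈ D)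
    (H : Finset V → ℝ)
    (hB : ∃ w : V → ℝ, (∀ S ∈ D, ∑ v ∈ S, w v ≤ H S) ∧ ∑ v, w v = H Finset.univ)
    (x : V → ℝ)
    (hfin : (⨆ w ∈ {w : V → ℝ |
        (∀ S ∈ D, ∑ v ∈ S, w v ≤ H S) ∧ ∑ v, w v = H Finset.univ},
      ((∑ v, x v * w v : ℝ) : EReal)) < ⊤) :
    ∀ α : ℝ, (Finset.univ.filter fun v => α ≤ x v) ∈ D := by
  intro α
  refine mem_of_forall_exists_mem_not_mem hD0 hDV hDu hDi _ fun v hv u hu => ?_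
  simp only [mem_filter, mem_univ, true_and, not_le] at hv hu
  by_contra! hvu
  have hx : lovaszExtension D H x ≠ ⊤ := hfin.ne
  linarith [le_of_lovaszExtension_ne_top hB hx hvu]

/-- If the Lovász extension value `h(x) = sup_{w ∈ B_D(H)} ⟨x,w⟩` is finite,
then every superlevel set `{x ≥ α}` belongs to the distributive lattice `D`. -/
theorem superlevel_mem_of_lovasz_finite {V : Type*} [Fintype V] [DecidableEq V]
    (D : Set (Finset V)) (hD0 : ∅ ∈ D) (hDV : Finset.univ ∈ D)
    (hDu : ∀ S T, S ∈ D → T ∈ D → S ∪ T ∈ D)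
    (hDi : ∀ S T, S ∈ D → T ∈ D → S ∩ T ∈ D)
    (H : Finset V → ℝ)
    (hsub : ∀ S T, S ∈ D → T ∈ D → H (S ∪ T) + H (S ∩ T) ≤ H S + H T)
    (hB : ∃ w : V → ℝ, (∀ S ∈ D, ∑ v ∈ S, w v ≤ H S) ∧ ∑ v, w v = H Finset.univ)
    (x : V → ℝ)
    (hfin : (⨆ w ∈ {w : V → ℝ |
        (∀ S ∈ D, ∑ v ∈ S, w v ≤ H S) ∧ ∑ v, w v = H Finset.univ},
      ((∑ v, x v * w v : ℝ) : EReal)) < ⊤) :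
    ∀ α : ℝ, (Finset.univ.filter fun v => α ≤ x v) ∈ D :=
  superlevel_mem_of_lovasz_finite_general D hD0 hDV hDu hDi H hB x hfin
end

section
/- Let F_e : 2^V → ℝ_+ (e ∈ E) be nonnegative submodular functions with F_e(∅)=F_e(V)=0. Define the effective resistance R_F(u,v) as the optimal value of min { ‖φ‖² : φ ≥ 0, Σ_e φ(e) F_e(X) ≥ (e_u − e_v)(X) for all X ⊆ V } (and +∞ if infeasible). Then R_F satisfies the triangle inequality: R_F(u,v) + R_F(v,w) ≥ R_F(u,w) for all u, v, w ∈ V, whenever R_F(u,v) and R_F(v,w) are finite. -/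
/-!
If `φ` routes the demand `e_u - e_v` and `ψ` routes `e_v - e_w`, then `φ ⊔ ψ` routes `e_u - e_w`:
on every cut `X`, the value `(e_u - e_w)(X) ∈ {-1, 0, 1}` is at most one of `(e_u - e_v)(X)` and
`(e_v - e_w)(X)`, and raising `φ` to `φ ⊔ ψ` only increases `Σ_e φ(e) F_e(X)` because `F_e ≥ 0`.
Since `‖φ ⊔ ψ‖² ≤ ‖φ‖² + ‖ψ‖²`, taking infima over `φ` and `ψ` gives the triangle inequality.
-/

open Finset

lemma csInf_le_csInf_add_csInf {α : Type*} [ConditionallyCompleteLattice α] [AddCommGroup α]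
    [IsOrderedAddMonoid α] {S T U : Set α} (hS : S.Nonempty) (hT : T.Nonempty)
    (hU : BddBelow U) (h : ∀ s ∈ S, ∀ t ∈ T, ∃ u ∈ U, u ≤ s + t) :
    sInf U ≤ sInf S + sInf T := by
  rw [← sub_le_iff_le_add]
  refine le_csInf hS fun s hs => ?_
  rw [sub_le_iff_le_add', ← sub_le_iff_le_add]
  refine le_csInf hT fun t ht => ?_
  obtain ⟨u, hu, hle⟩ := h s hs t ht
  rw [sub_le_iff_le_add']
  exact (csInf_le hU hu).trans hle

lemma max_sq_le_sq_add_sq (a b : ℝ) : max a b ^ 2 ≤ a ^ 2 + b ^ 2 := by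
  rcases max_choice a b with h | h <;> rw [h] <;> nlinarith [sq_nonneg a, sq_nonneg b]

lemma sum_single_sub_single {V : Type*} [DecidableEq V] (a b : V) (X : Finset V) :
    ∑ x ∈ X, (Pi.single a (1 : ℝ) - Pi.single b 1 : V → ℝ) x =
      (if a ∈ X then 1 else 0) - if b ∈ X then 1 else 0 := by
  simp [Pi.single_apply, sum_sub_distrib]

lemma ite_sub_ite_le_max (p q r : Prop) [Decidable p] [Decidable q] [Decidable r] :
    ((if p then (1 : ℝ) else 0) - if r then 1 else 0) ≤
      max ((if p then 1 else 0) - if q then 1 else 0) ((if q then 1 else 0) - if r then 1 else 0) := by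
  split_ifs <;> norm_num

section Resistance

variable {V E : Type*} [Fintype E] (F : E → Finset V → ℝ)

def IsFeasible (b : V → ℝ) (φ : E → ℝ) : Prop :=
  (∀ e, 0 ≤ φ e) ∧ ∀ X : Finset V, ∑ x ∈ X, b x ≤ ∑ e, φ e * F e X

/-- An infeasible demand gets `sInf ∅ = 0`, not `+∞`, so feasibility has to be assumed. -/
noncomputable def resistance (b : V → ℝ) : ℝ :=
  sInf {r : ℝ | ∃ φ : E → ℝ, IsFeasible F b φ ∧ r = ∑ e, φ e ^ 2}

variable {F}

lemma bddBelow_resistance_set (b : V → ℝ) :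
    BddBelow {r : ℝ | ∃ φ : E → ℝ, IsFeasible F b φ ∧ r = ∑ e, φ e ^ 2} :=
  ⟨0, by rintro _ ⟨φ, -, rfl⟩; positivity⟩

lemma IsFeasible.sup (hnn : ∀ e X, 0 ≤ F e X) {b₁ b₂ b : V → ℝ} {φ ψ : E → ℝ}
    (hφ : IsFeasible F b₁ φ) (hψ : IsFeasible F b₂ ψ)
    (hb : ∀ X : Finset V, ∑ x ∈ X, b x ≤ max (∑ x ∈ X, b₁ x) (∑ x ∈ X, b₂ x)) :
    IsFeasible F b (φ ⊔ ψ) := by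
  refine ⟨fun e => le_max_of_le_left (hφ.1 e), fun X => (hb X).trans (max_le ?_ ?_)⟩
  · exact (hφ.2 X).trans <| sum_le_sum fun e _ =>
      mul_le_mul_of_nonneg_right (le_max_left _ _) (hnn e X)
  · exact (hψ.2 X).trans <| sum_le_sum fun e _ =>
      mul_le_mul_of_nonneg_right (le_max_right _ _) (hnn e X)

lemma resistance_le_add (hnn : ∀ e X, 0 ≤ F e X) {b₁ b₂ b : V → ℝ}
    (h₁ : ∃ φ, IsFeasible F b₁ φ) (h₂ : ∃ ψ, IsFeasible F b₂ ψ)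
    (hb : ∀ X : Finset V, ∑ x ∈ X, b x ≤ max (∑ x ∈ X, b₁ x) (∑ x ∈ X, b₂ x)) :
    resistance F b ≤ resistance F b₁ + resistance F b₂ := by
  obtain ⟨φ₀, hφ₀⟩ := h₁
  obtain ⟨ψ₀, hψ₀⟩ := h₂
  refine csInf_le_csInf_add_csInf ⟨_, φ₀, hφ₀, rfl⟩ ⟨_, ψ₀, hψ₀, rfl⟩
    (bddBelow_resistance_set b) ?_
  rintro _ ⟨φ, hφ, rfl⟩ _ ⟨ψ, hψ, rfl⟩
  refine ⟨_, ⟨φ ⊔ ψ, hφ.sup hnn hψ hb, rfl⟩, ?_⟩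
  rw [← sum_add_distrib]
  exact sum_le_sum fun e _ => max_sq_le_sq_add_sq (φ e) (ψ e)

end Resistance

theorem effective_resistance_triangle_general {V E : Type*} [DecidableEq V] [Fintype E]
    (F : E → Finset V → ℝ)
    (hnn : ∀ e S, 0 ≤ F e S)
    (u v w : V) :
    let feas : (V → ℝ) → (E → ℝ) → Prop := fun b φ =>
      (∀ e, 0 ≤ φ e) ∧ ∀ X : Finset V, (∑ x ∈ X, b x) ≤ ∑ e, φ e * F e X
    let R : (V → ℝ) → ℝ := fun b =>
      sInf {r : ℝ | ∃ φ : E → ℝ, feas b φ ∧ r = ∑ e, (φ e) ^ 2}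
    (∃ φ, feas (Pi.single u (1 : ℝ) - Pi.single v 1) φ) →
    (∃ φ, feas (Pi.single v (1 : ℝ) - Pi.single w 1) φ) →
    R (Pi.single u (1 : ℝ) - Pi.single w 1) ≤
      R (Pi.single u (1 : ℝ) - Pi.single v 1) +
      R (Pi.single v (1 : ℝ) - Pi.single w 1) := by
  intro feas R h₁ h₂
  refine resistance_le_add (F := F) hnn h₁ h₂ fun X => ?_
  simp only [sum_single_sub_single]
  exact ite_sub_ite_le_max _ _ _

/-- Triangle inequality for the effective resistance defined via the dual problem
`R_F(u,v) = min { ‖φ‖² : φ ≥ 0, Σ_e φ(e) F_e(X) ≥ (e_u − e_v)(X) ∀X }`,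
assuming `R_F(u,v)` and `R_F(v,w)` are finite (i.e., the two problems are feasible). -/
theorem effective_resistance_triangle {V E : Type*} [Fintype V] [DecidableEq V] [Fintype E]
    (F : E → Finset V → ℝ)
    (hsub : ∀ e (S T : Finset V), F e (S ∪ T) + F e (S ∩ T) ≤ F e S + F e T)
    (hnn : ∀ e S, 0 ≤ F e S)
    (h0 : ∀ e, F e ∅ = 0) (hV : ∀ e, F e Finset.univ = 0)
    (u v w : V) :
    let feas : (V → ℝ) → (E → ℝ) → Prop := fun b φ =>
      (∀ e, 0 ≤ φ e) ∧ ∀ X : Finset V, (∑ x ∈ X, b x) ≤ ∑ e, φ e * F e X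
    let R : (V → ℝ) → ℝ := fun b =>
      sInf {r : ℝ | ∃ φ : E → ℝ, feas b φ ∧ r = ∑ e, (φ e) ^ 2}
    (∃ φ, feas (Pi.single u (1 : ℝ) - Pi.single v 1) φ) →
    (∃ φ, feas (Pi.single v (1 : ℝ) - Pi.single w 1) φ) →
    R (Pi.single u (1 : ℝ) - Pi.single w 1) ≤
      R (Pi.single u (1 : ℝ) - Pi.single v 1) +
      R (Pi.single v (1 : ℝ) - Pi.single w 1) :=
  effective_resistance_triangle_general F hnn u v w
end
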